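/- For every k ∈ ℕ and every finite subset E of the free group F, ⟨χ_k ∗ χ_E, χ_E⟩ ≤ 2 · q^{⌊k/2⌋} · |E|. Equivalently, the number of pairs (u, v) ∈ E × E with |v u⁻¹| = k is at most 2 q^{⌊k/2⌋} |E|. -/

import Mathlib

open scoped ENNReal

noncomputable section

/-- Word length on the free group: the number of letters of the reduced word. -/
def wlen {α : Type*} [DecidableEq α] (x : FreeGroup α) : ℕ := x.toWord.length

/-- Convolution of `ℝ≥0∞`-valued functions on a group:
`(f ∗ g)(x) = Σ_y f(y) g(y⁻¹ x)`. -/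
def conv {G : Type*} [Group G] (f g : G → ℝ≥0∞) (x : G) : ℝ≥0∞ :=
  ∑' y, f y * g (y⁻¹ * x)

/-- Indicator (ℝ≥0∞-valued) of the sphere of radius `k` in the free group. -/
def sphInd {α : Type*} [DecidableEq α] (k : ℕ) (x : FreeGroup α) : ℝ≥0∞ :=
  if wlen x = k then 1 else 0

/-- Indicator function (ℝ≥0∞-valued) of a finite set. -/
def finInd {G : Type*} [DecidableEq G] (E : Finset G) (x : G) : ℝ≥0∞ :=
  if x ∈ E then 1 else 0

/-!
Write the reduced words of `x, u ∈ E` as `x = P S`, `u = Q S` with `S` their longest common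
suffix. Then `P Q⁻¹` is the reduced word of `x u⁻¹`, so `|P| + |Q| = k` and one of `P`, `Q` has
length at least `⌈k/2⌉`. If it is `P`, the reduced word of `x u⁻¹` begins with the first `⌈k/2⌉`
letters of `x`; for fixed `x`, such a `u` is determined by the remaining `⌊k/2⌋` letters of
`x u⁻¹`, and each of them has at most `q` choices, since a reduced word never continues with the
inverse of its last letter. The pairs where it is `Q` are counted in the same way with `x` and `u`
exchanged, which gives the factor `2`.
-/

open Finset

section Chains

variable {β : Type*} [DecidableEq β] [Fintype β] (R : β → β → Prop) [DecidableRel R]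

def chainsFrom (d : β) : ℕ → Finset (List β)
  | 0 => {[]}
  | n + 1 => ({b | R d b} : Finset β).biUnion fun b => (chainsFrom b n).image (b :: ·)

variable {R}

theorem mem_chainsFrom {d : β} {n : ℕ} {L : List β} :
    L ∈ chainsFrom R d n ↔ L.length = n ∧ (d :: L).IsChain R := by
  induction n generalizing d L with
  | zero => cases L <;> simp [chainsFrom]
  | succ n ih =>
    cases L with
    | nil => simp [chainsFrom]
    | cons b L => simp only [chainsFrom, mem_biUnion, mem_image, ih]; grind

theorem card_chainsFrom_le {q : ℕ} (hq : ∀ a, #{b | R a b} ≤ q) (d : β) (n : ℕ) :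
    #(chainsFrom R d n) ≤ q ^ n := by
  induction n generalizing d with
  | zero => simp [chainsFrom]
  | succ n ih =>
    calc #(chainsFrom R d (n + 1))
        ≤ ∑ b ∈ {b | R d b}, #((chainsFrom R b n).image (b :: ·)) := card_biUnion_le
      _ ≤ ∑ b ∈ {b | R d b}, q ^ n := sum_le_sum fun b _ => card_image_le.trans (ih b)
      _ ≤ q ^ (n + 1) := by
        rw [sum_const, smul_eq_mul, pow_succ']
        exact Nat.mul_le_mul_right _ (hq d)

end Chains

theorem Finset.sum_card_filter_le_two_mul {ι : Type*} [DecidableEq ι] (E : Finset ι)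
    (P A : ι → ι → Prop) [DecidableRel P] [DecidableRel A]
    (hP : ∀ x u, P x u → P u x) (hA : ∀ x u, P x u → A x u ∨ A u x) :
    ∑ x ∈ E, #{u ∈ E | P x u} ≤ 2 * ∑ x ∈ E, #{u ∈ E | P x u ∧ A x u} := by
  calc ∑ x ∈ E, #{u ∈ E | P x u}
      ≤ ∑ x ∈ E, (#{u ∈ E | P x u ∧ A x u} + #{u ∈ E | P u x ∧ A u x}) := by
        refine sum_le_sum fun x _ => (card_le_card fun u hu => ?_).trans (card_union_le _ _)
        simp only [mem_filter, mem_union] at hu ⊢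
        rcases hA x u hu.2 with h | h
        exacts [Or.inl ⟨hu.1, hu.2, h⟩, Or.inr ⟨hu.1, hP x u hu.2, h⟩]
    _ = 2 * ∑ x ∈ E, #{u ∈ E | P x u ∧ A x u} := by
        rw [sum_add_distrib, two_mul]
        congr 1
        simp only [card_filter]
        exact sum_comm

namespace FreeGroup

variable {α : Type*} [DecidableEq α]

theorem IsReduced.invRev {L : List (α × Bool)} (h : IsReduced L) : IsReduced (invRev L) := by
  rw [isReduced_iff_reduce_eq, reduce_invRev, h.reduce_eq]

theorem reduce_invRev_cons_append_cons (a : α × Bool) (A B : List (α × Bool)) :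
    reduce (invRev (a :: A) ++ a :: B) = reduce (invRev A ++ B) := by
  apply reduce.sound
  simp only [← mul_mk, ← inv_mk, ← List.singleton_append (l := A), ← List.singleton_append (l := B)]
  group

theorem exists_reduce_invRev_append :
    ∀ {A B : List (α × Bool)}, IsReduced A → IsReduced B →
      ∃ C A' B', A = C ++ A' ∧ B = C ++ B' ∧ reduce (invRev A ++ B) = invRev A' ++ B'
  | a :: A, b :: B, hA, hB => by
    by_cases hab : a = b
    · subst hab
      obtain ⟨C, A', B', rfl, rfl, h⟩ := exists_reduce_invRev_append hA.tail hB.tail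
      exact ⟨a :: C, A', B', rfl, rfl, by rw [reduce_invRev_cons_append_cons]; exact h⟩
    · refine ⟨[], a :: A, b :: B, rfl, rfl, IsReduced.reduce_eq ?_⟩
      have hjoin : IsReduced (invRev [a] ++ b :: B) := by
        refine isReduced_cons_cons.mpr ⟨fun h1 => ?_, hB⟩
        contrapose! hab
        exact Prod.ext h1 (by simpa using hab)
      rw [invRev_cons]
      exact IsReduced.append_overlap (invRev_cons (a := a) ▸ hA.invRev) hjoin (by simp [invRev])
  | [], B, _, hB => ⟨[], [], B, rfl, rfl, by simpa using hB.reduce_eq⟩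
  | A, [], hA, _ => ⟨[], A, [], rfl, rfl, by simpa using hA.invRev.reduce_eq⟩

theorem exists_toWord_inv_mul (g h : FreeGroup α) :
    ∃ C A B, g.toWord = C ++ A ∧ h.toWord = C ++ B ∧ (g⁻¹ * h).toWord = invRev A ++ B := by
  simpa [toWord_mul, toWord_inv] using
    exists_reduce_invRev_append (isReduced_toWord (x := g)) (isReduced_toWord (x := h))

theorem take_toWord_mul_inv_or {x u : FreeGroup α} {n m : ℕ} (h : n + m ≤ norm (x * u⁻¹) + 1) :
    (x * u⁻¹).toWord.take n = x.toWord.take n ∨ (u * x⁻¹).toWord.take m = u.toWord.take m := by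
  obtain ⟨C, A, B, hx, hu, hxu⟩ := exists_toWord_inv_mul x⁻¹ u⁻¹
  rw [inv_inv] at hxu
  have hux : (u * x⁻¹).toWord = invRev B ++ A := by
    rw [← inv_inv (u * x⁻¹), mul_inv_rev, inv_inv, toWord_inv, hxu, invRev_append, invRev_invRev]
  have hx' : x.toWord = invRev (C ++ A) := by rw [← hx, ← toWord_inv, inv_inv]
  have hu' : u.toWord = invRev (C ++ B) := by rw [← hu, ← toWord_inv, inv_inv]
  have hk : norm (x * u⁻¹) = A.length + B.length := by
    rw [norm, hxu, List.length_append, invRev_length]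
  rcases le_or_gt n A.length with hn | hn
  · left
    rw [hxu, hx', invRev_append, List.take_append_of_le_length (by rwa [invRev_length]),
      List.take_append_of_le_length (by rwa [invRev_length])]
  · right
    rw [hux, hu', invRev_append, List.take_append_of_le_length (by rw [invRev_length]; omega),
      List.take_append_of_le_length (by rw [invRev_length]; omega)]

variable [Fintype α]

theorem card_filter_fst_eq_imp_snd_eq (a : α × Bool) :
    #{b : α × Bool | a.1 = b.1 → a.2 = b.2} = 2 * Fintype.card α - 1 := by
  have : ({b | a.1 = b.1 → a.2 = b.2} : Finset (α × Bool)) = univ.erase (a.1, !a.2) := by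
    ext b
    simp only [mem_filter, mem_univ, true_and, mem_erase, ne_eq, Prod.ext_iff, and_true]
    cases a.2 <;> cases b.2 <;> tauto
  rw [this, card_erase_of_mem (mem_univ _), card_univ, Fintype.card_prod, Fintype.card_bool,
    mul_comm]

theorem card_filter_norm_eq_take_eq_le (S : Finset (FreeGroup α)) (w : List (α × Bool))
    {k n : ℕ} (hn : 0 < n) (hnk : n ≤ k) :
    #{y ∈ S | norm y = k ∧ y.toWord.take n = w} ≤ (2 * Fintype.card α - 1) ^ (k - n) := by
  rcases (S.filter fun y => norm y = k ∧ y.toWord.take n = w).eq_empty_or_nonempty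
    with hS | ⟨y₀, hy₀⟩
  · simp [hS]
  have hw : w ≠ [] := by
    obtain ⟨-, hy₀k, rfl⟩ := mem_filter.mp hy₀
    rw [norm] at hy₀k
    rw [← List.length_pos_iff, List.length_take]
    omega
  calc _ ≤ #(chainsFrom (fun a b : α × Bool => a.1 = b.1 → a.2 = b.2) (w.getLast hw) (k - n)) := by
        refine card_le_card_of_injOn (fun y => y.toWord.drop n) (fun y hy => ?_)
          fun y hy y' hy' h => ?_
        · obtain ⟨-, hyk, hyw⟩ := mem_filter.mp hy
          refine mem_chainsFrom.mpr ⟨by simp [← hyk, norm], ?_⟩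
          have := isReduced_toWord (x := y)
          rw [← List.take_append_drop n y.toWord, hyw, ← List.dropLast_append_getLast hw,
            List.append_assoc] at this
          exact this.infix ⟨w.dropLast, [], by simp⟩
        · obtain ⟨-, -, hyw⟩ := mem_filter.mp hy
          obtain ⟨-, -, hy'w⟩ := mem_filter.mp hy'
          apply toWord_injective
          rw [← List.take_append_drop n y.toWord, ← List.take_append_drop n y'.toWord, hyw, hy'w]
          exact congrArg _ h
    _ ≤ _ := card_chainsFrom_le (fun a => (card_filter_fst_eq_imp_snd_eq a).le) _ _

theorem card_filter_norm_mul_inv_eq_le (x : FreeGroup α) (E : Finset (FreeGroup α)) (k : ℕ) :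
    #{u ∈ E | norm (x * u⁻¹) = k ∧
        (x * u⁻¹).toWord.take (k - k / 2) = x.toWord.take (k - k / 2)}
      ≤ (2 * Fintype.card α - 1) ^ (k / 2) := by
  rcases Nat.eq_zero_or_pos k with rfl | hk
  · refine card_le_one.mpr fun u hu v hv => ?_
    simp only [mem_filter, norm_eq_zero, mul_inv_eq_one] at hu hv
    rw [← hu.2.1, ← hv.2.1]
  calc _ ≤ #{y ∈ E.image (x * ·⁻¹) | norm y = k ∧
          y.toWord.take (k - k / 2) = x.toWord.take (k - k / 2)} :=
        card_le_card_of_injOn (x * ·⁻¹)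
          (fun u hu => by
            simp only [mem_coe, mem_filter] at hu ⊢
            exact ⟨mem_image_of_mem _ hu.1, hu.2⟩)
          fun u _ v _ h => by simpa using h
    _ ≤ _ := by
      convert card_filter_norm_eq_take_eq_le _ _ (by omega : 0 < k - k / 2) (Nat.sub_le k (k / 2))
        using 2
      omega

end FreeGroup

theorem FreeGroup.sum_card_filter_norm_mul_inv_eq_le {α : Type*} [DecidableEq α] [Fintype α]
    (E : Finset (FreeGroup α)) (k : ℕ) :
    ∑ x ∈ E, #{u ∈ E | norm (x * u⁻¹) = k} ≤ 2 * (2 * Fintype.card α - 1) ^ (k / 2) * #E := by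
  calc _ ≤ 2 * ∑ x ∈ E, #{u ∈ E | norm (x * u⁻¹) = k ∧
          (x * u⁻¹).toWord.take (k - k / 2) = x.toWord.take (k - k / 2)} :=
        sum_card_filter_le_two_mul E _ _
          (fun x u h => by rwa [← norm_inv_eq, mul_inv_rev, inv_inv])
          fun x u h => take_toWord_mul_inv_or (by omega)
    _ ≤ 2 * ∑ x ∈ E, (2 * Fintype.card α - 1) ^ (k / 2) := by
      gcongr with x
      exact card_filter_norm_mul_inv_eq_le x E k
    _ = _ := by rw [sum_const, smul_eq_mul]; ring

section Convolution

variable {G : Type*} [DecidableEq G]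

theorem tsum_mul_finInd (f : G → ℝ≥0∞) (E : Finset G) :
    ∑' x, f x * finInd E x = ∑ x ∈ E, f x := by
  rw [tsum_eq_sum (s := E) fun x hx => by simp [finInd, hx]]
  exact sum_congr rfl fun x hx => by simp [finInd, hx]

theorem conv_finInd_apply [Group G] (f : G → ℝ≥0∞) (E : Finset G) (x : G) :
    conv f (finInd E) x = ∑ u ∈ E, f (x * u⁻¹) := by
  rw [conv, ← ((Equiv.inv G).trans (Equiv.mulLeft x)).tsum_eq]
  simp [tsum_mul_finInd]

end Convolution

theorem sum_sphInd_mul_inv {α : Type*} [DecidableEq α] (k : ℕ) (x : FreeGroup α)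
    (E : Finset (FreeGroup α)) :
    ∑ u ∈ E, sphInd k (x * u⁻¹) = #{u ∈ E | FreeGroup.norm (x * u⁻¹) = k} :=
  sum_boole _ _

theorem sphere_conv_self_inner_le_general
    (r : ℕ) (q : ℕ) (hq : q = 2 * r - 1)
    (k : ℕ) (E : Finset (FreeGroup (Fin r))) :
    ∑' x : FreeGroup (Fin r), conv (sphInd k) (finInd E) x * finInd E x
      ≤ 2 * (q : ℝ≥0∞) ^ (k / 2) * (E.card : ℝ≥0∞) := by
  have hcount := FreeGroup.sum_card_filter_norm_mul_inv_eq_le E k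
  rw [Fintype.card_fin, ← hq] at hcount
  calc ∑' x, conv (sphInd k) (finInd E) x * finInd E x
      = ∑ x ∈ E, (#{u ∈ E | FreeGroup.norm (x * u⁻¹) = k} : ℝ≥0∞) := by
        simp only [tsum_mul_finInd, conv_finInd_apply, sum_sphInd_mul_inv]
    _ ≤ 2 * (q : ℝ≥0∞) ^ (k / 2) * (E.card : ℝ≥0∞) := by exact_mod_cast hcount

/-- For every `k` and every finite subset `E` of the free group,
`⟨χ_k ∗ χ_E, χ_E⟩ ≤ 2 q^{⌊k/2⌋} |E|`. -/
theorem sphere_conv_self_inner_le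
    (r : ℕ) (hr : 2 ≤ r) (q : ℕ) (hq : q = 2 * r - 1)
    (k : ℕ) (E : Finset (FreeGroup (Fin r))) :
    ∑' x : FreeGroup (Fin r), conv (sphInd k) (finInd E) x * finInd E x
      ≤ 2 * (q : ℝ≥0∞) ^ (k / 2) * (E.card : ℝ≥0∞) :=
  sphere_conv_self_inner_le_general r q hq k E
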